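/- Let n ≥ 1 be an integer and let T₀ = conv{ρ₀, ρ_u, ρ_v} and T₁ = conv{ρ₁, ρ_u, ρ_v} be two adjacent A_n-triangles in ℤ³, and let w₀, w₁ ∈ Hom(ℤ³, ℤ) be the unique linear forms taking the value 1 on the vertices of T₀ and of T₁ respectively. Then the lattice length of the segment from w₀ to w₁ in the dual lattice, i.e. the gcd of the three coordinates of w₀ − w₁ (with respect to the dual basis), equals |1 − ⟨w₁, ρ₀⟩|. -/

import Mathlib

open Matrix

/-- The coordinatewise embedding `ℤ³ → ℝ³`. -/
def toR3 (v : Fin 3 → ℤ) : Fin 3 → ℝ := fun i => (v i : ℝ)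

/-- The lattice length of the segment between two lattice points `p, q ∈ ℤ³`:
the gcd of the coordinates of `q − p`. -/
def latticeLength (p q : Fin 3 → ℤ) : ℕ :=
  Int.gcd (q 0 - p 0) ((Int.gcd (q 1 - p 1) (q 2 - p 2) : ℕ) : ℤ)

/-- The relative interior of the triangle with vertices `a, b, c ∈ ℝ³`: points with all
barycentric coordinates (strictly) positive. -/
def relIntTriangle (a b c : Fin 3 → ℝ) : Set (Fin 3 → ℝ) :=
  {x | ∃ t₁ t₂ t₃ : ℝ, 0 < t₁ ∧ 0 < t₂ ∧ 0 < t₃ ∧ t₁ + t₂ + t₃ = 1 ∧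
    x = t₁ • a + t₂ • b + t₃ • c}

/-- An `Aₙ`-triangle in `ℤ³`: three affinely independent lattice points such that (1) the
relative interior of their convex hull contains no lattice point, (2) the edges have lattice
lengths `1`, `1`, `n+1`, (3) some linear form `w ∈ Hom(ℤ³, ℤ)` takes the value `1` on all
three vertices. -/
structure IsAnTriangle (n : ℕ) (v₁ v₂ v₃ : Fin 3 → ℤ) : Prop where
  affInd : AffineIndependent ℝ ![toR3 v₁, toR3 v₂, toR3 v₃]
  no_interior_point : ∀ p : Fin 3 → ℤ, toR3 p ∉ relIntTriangle (toR3 v₁) (toR3 v₂) (toR3 v₃)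
  edge_lengths : ({latticeLength v₁ v₂, latticeLength v₂ v₃, latticeLength v₁ v₃} : Multiset ℕ)
    = {1, 1, n + 1}
  height_one : ∃ w : Fin 3 → ℤ, w ⬝ᵥ v₁ = 1 ∧ w ⬝ᵥ v₂ = 1 ∧ w ⬝ᵥ v₃ = 1

/-- Two adjacent `Aₙ`-triangles `T₀ = conv{ρ₀, ρᵤ, ρᵥ}` and `T₁ = conv{ρ₁, ρᵤ, ρᵥ}` in `ℤ³`:
both are `Aₙ`-triangles, the common edge `conv{ρᵤ, ρᵥ}` is the edge of lattice length `n+1`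
of both, and `ρ₀`, `ρ₁` lie in the two different open half-spaces of `ℝ³` determined by the
plane spanned by `ρᵤ` and `ρᵥ`. -/
structure AreAdjacentAnTriangles (n : ℕ) (ρ₀ ρ₁ ρu ρv : Fin 3 → ℤ) : Prop where
  t₀ : IsAnTriangle n ρ₀ ρu ρv
  t₁ : IsAnTriangle n ρ₁ ρu ρv
  common_edge_length : latticeLength ρu ρv = n + 1
  opposite_sides : ∃ φ : (Fin 3 → ℝ) →ₗ[ℝ] ℝ,
    φ (toR3 ρu) = 0 ∧ φ (toR3 ρv) = 0 ∧ φ (toR3 ρ₀) < 0 ∧ 0 < φ (toR3 ρ₁)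

/-! In `T₀` the short edge `a = ρ₀ - ρᵤ` is primitive, and so is `b` with `ρᵥ - ρᵤ = (n + 1) b`;
together with `ρᵤ` they form a basis of `ℤ³`.
Indeed, a lattice point `x` with `⟨w₀, x⟩ = 0` is a real combination `α a + β b`; by
primitivity `α ∈ ℤ ↔ β ∈ ℤ`, and if neither is an integer then, after replacing `x` by `-x` so
that `{α} ≤ 1/2`, the lattice point `ρᵤ + {α} a + {β} b` lies in the relative interior of `T₀`,
because `{β}/(n + 1) < 1/2`. In this basis `w₁ - w₀` vanishes on `ρᵤ` and `b` and takes the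
value `⟨w₁, ρ₀⟩ - 1` on `a`, so it is `⟨w₁, ρ₀⟩ - 1` times a primitive dual vector. -/

lemma toR3_injective : Function.Injective toR3 :=
  fun _ _ h => funext fun i => Int.cast_injective (congrFun h i)

@[simp] lemma toR3_add (u v : Fin 3 → ℤ) : toR3 (u + v) = toR3 u + toR3 v := by
  ext; simp [toR3]

@[simp] lemma toR3_sub (u v : Fin 3 → ℤ) : toR3 (u - v) = toR3 u - toR3 v := by
  ext; simp [toR3]

@[simp] lemma toR3_neg (v : Fin 3 → ℤ) : toR3 (-v) = -toR3 v := by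
  ext; simp [toR3]

@[simp] lemma toR3_smul (k : ℤ) (v : Fin 3 → ℤ) : toR3 (k • v) = (k : ℝ) • toR3 v := by
  ext; simp [toR3]

@[simp] lemma toR3_dotProduct (u v : Fin 3 → ℤ) : toR3 u ⬝ᵥ toR3 v = ((u ⬝ᵥ v : ℤ) : ℝ) := by
  simp [toR3, dotProduct]

lemma latticeLength_dvd (p q : Fin 3 → ℤ) (i : Fin 3) : (latticeLength p q : ℤ) ∣ q i - p i := by
  have h12 : (latticeLength p q : ℤ) ∣ Int.gcd (q 1 - p 1) (q 2 - p 2) := Int.gcd_dvd_right _ _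
  fin_cases i
  · exact Int.gcd_dvd_left _ _
  · exact h12.trans (Int.gcd_dvd_left _ _)
  · exact h12.trans (Int.gcd_dvd_right _ _)

lemma exists_sub_eq_latticeLength_smul (p q : Fin 3 → ℤ) :
    ∃ b, q - p = (latticeLength p q : ℤ) • b := by
  choose b hb using latticeLength_dvd p q
  exact ⟨b, funext fun i => by simpa using hb i⟩

lemma dvd_latticeLength {p q : Fin 3 → ℤ} {d : ℤ} (h : ∀ i, d ∣ q i - p i) :
    d ∣ latticeLength p q :=
  Int.dvd_coe_gcd (h 0) (Int.dvd_coe_gcd (h 1) (h 2))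

lemma latticeLength_dvd_dotProduct (p q u : Fin 3 → ℤ) : (latticeLength p q : ℤ) ∣ (q - p) ⬝ᵥ u :=
  Finset.dvd_sum fun i _ => (latticeLength_dvd p q i).mul_right _

lemma latticeLength_comm (p q : Fin 3 → ℤ) : latticeLength p q = latticeLength q p := by
  refine Int.natCast_dvd_natCast.mp ?_ |>.antisymm (Int.natCast_dvd_natCast.mp ?_) <;>
    refine dvd_latticeLength fun i => (dvd_neg.mpr (latticeLength_dvd _ _ i)).trans ?_ <;> simp

lemma exists_dotProduct_eq_latticeLength (p q : Fin 3 → ℤ) :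
    ∃ u : Fin 3 → ℤ, u ⬝ᵥ (q - p) = latticeLength p q := by
  set v := q - p
  have h₀ := Int.gcd_eq_gcd_ab (v 0) (Int.gcd (v 1) (v 2))
  have h₁₂ := Int.gcd_eq_gcd_ab (v 1) (v 2)
  refine ⟨![Int.gcdA (v 0) (Int.gcd (v 1) (v 2)),
    Int.gcdB (v 0) (Int.gcd (v 1) (v 2)) * Int.gcdA (v 1) (v 2),
    Int.gcdB (v 0) (Int.gcd (v 1) (v 2)) * Int.gcdB (v 1) (v 2)], ?_⟩
  simp only [latticeLength, dotProduct, Fin.sum_univ_three]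
  simp only [v, Pi.sub_apply] at h₀ h₁₂ ⊢
  rw [h₀, h₁₂]
  simp
  ring

lemma latticeLength_eq_natAbs {p q : Fin 3 → ℤ} {m : ℤ} (hdvd : ∀ i, m ∣ q i - p i)
    {u : Fin 3 → ℤ} (hu : (q - p) ⬝ᵥ u = m) : latticeLength p q = m.natAbs :=
  (Int.natAbs_eq_of_dvd_dvd (dvd_latticeLength hdvd)
    (hu ▸ latticeLength_dvd_dotProduct p q u)).symm

lemma AffineIndependent.linearIndependent_of_forall_eq_one {k V ι : Type*} [Ring k]
    [AddCommGroup V] [Module k V] {p : ι → V} (hp : AffineIndependent k p) (f : V →ₗ[k] k)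
    (hf : ∀ i, f (p i) = 1) : LinearIndependent k p := by
  refine linearIndependent_iff'.mpr fun s g hg => hp.eq_zero_of_sum_eq_zero ?_ hg
  simpa [hf] using congrArg f hg

lemma AffineIndependent.exists_eq_smul_sub_add_smul_sub {k V : Type*} [Field k]
    [AddCommGroup V] [Module k V] (hV : Module.finrank k V = 3) {p : Fin 3 → V}
    (hp : AffineIndependent k p) (f : V →ₗ[k] k) (hf : ∀ i, f (p i) = 1) {x : V}
    (hx : f x = 0) : ∃ α β : k, x = α • (p 0 - p 1) + β • (p 2 - p 1) := by
  have hspan := (hp.linearIndependent_of_forall_eq_one f hf).span_eq_top_of_card_eq_finrank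
    (by simp [hV])
  obtain ⟨c, rfl⟩ :=
    (Submodule.mem_span_range_iff_exists_fun k).mp (hspan ▸ Submodule.mem_top (x := x))
  have hc : c 0 + c 1 + c 2 = 0 := by simpa [Fin.sum_univ_three, hf] using hx
  refine ⟨c 0, c 2, ?_⟩
  rw [Fin.sum_univ_three, show c 1 = -c 0 - c 2 by linear_combination hc]
  module

lemma IsAnTriangle.latticeLength_eq_one {n : ℕ} {v₁ v₂ v₃ : Fin 3 → ℤ}
    (hT : IsAnTriangle n v₁ v₂ v₃)
    (hlong : latticeLength v₂ v₃ = n + 1) : latticeLength v₁ v₂ = 1 := by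
  have h := hT.edge_lengths
  rw [hlong] at h
  have h₁ := congrArg (Multiset.count 1) h
  have h₂ := congrArg (Multiset.count (latticeLength v₁ v₂)) h
  simp only [Multiset.insert_eq_cons, Multiset.count_cons, Multiset.count_singleton] at h₁ h₂
  split_ifs at h₁ h₂ <;> omega

lemma eq_dotProduct_of_toR3_eq_smul {u v k : Fin 3 → ℤ} {α : ℝ} (hu : u ⬝ᵥ v = 1)
    (h : toR3 k = α • toR3 v) : α = (u ⬝ᵥ k : ℤ) := by
  simpa [hu, dotProduct_smul] using (congrArg (toR3 u ⬝ᵥ ·) h).symm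

section Triangle

variable {n : ℕ} {ρ₀ ρu ρv b x : Fin 3 → ℤ} {α β : ℝ}

lemma toR3_sub_floor_mem_relIntTriangle (hn : 1 ≤ n) (hb : ρv - ρu = ((n : ℤ) + 1) • b)
    (hx : toR3 x = α • toR3 (ρ₀ - ρu) + β • toR3 b) (hα₀ : 0 < Int.fract α)
    (hα : Int.fract α ≤ 1 / 2) (hβ : 0 < Int.fract β) :
    toR3 (x - ⌊α⌋ • (ρ₀ - ρu) - ⌊β⌋ • b + ρu) ∈ relIntTriangle (toR3 ρ₀) (toR3 ρu) (toR3 ρv) := by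
  have hn' : (2 : ℝ) ≤ n + 1 := by norm_cast; omega
  have hb' : toR3 b = ((n : ℝ) + 1)⁻¹ • (toR3 ρv - toR3 ρu) := by
    rw [← toR3_sub, hb, toR3_smul, smul_smul]
    push_cast
    rw [inv_mul_cancel₀ (by positivity), one_smul]
  have ht₃ : Int.fract β * ((n : ℝ) + 1)⁻¹ < 1 / 2 := by
    rw [← div_eq_mul_inv, div_lt_iff₀ (by positivity)]
    nlinarith [Int.fract_lt_one β]
  refine ⟨Int.fract α, 1 - Int.fract α - Int.fract β * ((n : ℝ) + 1)⁻¹,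
    Int.fract β * ((n : ℝ) + 1)⁻¹, hα₀, by linarith, by positivity, by ring, ?_⟩
  rw [Int.fract, Int.fract]
  simp only [toR3_add, toR3_sub, toR3_smul, hx, hb']
  module

lemma exists_toR3_mem_relIntTriangle (hn : 1 ≤ n) (hb : ρv - ρu = ((n : ℤ) + 1) • b)
    (hx : toR3 x = α • toR3 (ρ₀ - ρu) + β • toR3 b) (hα : Int.fract α ≠ 0)
    (hβ : Int.fract β ≠ 0) :
    ∃ p, toR3 p ∈ relIntTriangle (toR3 ρ₀) (toR3 ρu) (toR3 ρv) := by
  rcases le_or_gt (Int.fract α) (1 / 2) with hα' | hα'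
  · exact ⟨_, toR3_sub_floor_mem_relIntTriangle hn hb hx ((Int.fract_nonneg α).lt_of_ne' hα) hα'
      ((Int.fract_nonneg β).lt_of_ne' hβ)⟩
  · have hx' : toR3 (-x) = (-α) • toR3 (ρ₀ - ρu) + (-β) • toR3 b := by
      rw [toR3_neg, hx]; module
    refine ⟨_, toR3_sub_floor_mem_relIntTriangle hn hb hx' ?_ ?_ ?_⟩ <;>
      simp only [Int.fract_neg hα, Int.fract_neg hβ] <;>
      linarith [Int.fract_lt_one α, Int.fract_lt_one β]

lemma fract_eq_zero_of_toR3_eq {ua ub : Fin 3 → ℤ} (hn : 1 ≤ n)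
    (hempty : ∀ p, toR3 p ∉ relIntTriangle (toR3 ρ₀) (toR3 ρu) (toR3 ρv))
    (hb : ρv - ρu = ((n : ℤ) + 1) • b) (hua : ua ⬝ᵥ (ρ₀ - ρu) = 1) (hub : ub ⬝ᵥ b = 1)
    (hx : toR3 x = α • toR3 (ρ₀ - ρu) + β • toR3 b) :
    Int.fract α = 0 ∧ Int.fract β = 0 := by
  have hαβ : Int.fract α = 0 ↔ Int.fract β = 0 := by
    constructor <;> intro h <;> obtain ⟨A, rfl⟩ := Int.fract_eq_zero_iff.mp h
    · rw [eq_dotProduct_of_toR3_eq_smul (k := x - A • (ρ₀ - ρu)) (α := β) hub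
        (by rw [toR3_sub, toR3_smul, hx, add_sub_cancel_left])]
      exact Int.fract_intCast _
    · rw [eq_dotProduct_of_toR3_eq_smul (k := x - A • b) (α := α) hua
        (by rw [toR3_sub, toR3_smul, hx, add_sub_cancel_right])]
      exact Int.fract_intCast _
  by_contra h
  rw [hαβ, and_self] at h
  obtain ⟨p, hp⟩ := exists_toR3_mem_relIntTriangle hn hb hx (hαβ.not.mpr h) h
  exact hempty p hp

lemma IsAnTriangle.exists_int_coords (hn : 1 ≤ n)
    (hT : IsAnTriangle n ρ₀ ρu ρv) (hlong : latticeLength ρu ρv = n + 1)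
    (hb : ρv - ρu = ((n : ℤ) + 1) • b) (z : Fin 3 → ℤ) :
    ∃ p q r : ℤ, z = p • ρu + q • (ρ₀ - ρu) + r • b := by
  obtain ⟨w, hw₀, hwu, hwv⟩ := hT.height_one
  obtain ⟨ua, hua⟩ : ∃ ua : Fin 3 → ℤ, ua ⬝ᵥ (ρ₀ - ρu) = 1 := by
    simpa [latticeLength_comm, hT.latticeLength_eq_one hlong] using
      exists_dotProduct_eq_latticeLength ρu ρ₀
  obtain ⟨ub, hub⟩ : ∃ ub : Fin 3 → ℤ, ub ⬝ᵥ b = 1 := by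
    obtain ⟨u, hu⟩ := exists_dotProduct_eq_latticeLength ρu ρv
    rw [hb, dotProduct_smul, hlong, smul_eq_mul] at hu
    exact ⟨u, mul_left_cancel₀ (by positivity) (hu.trans (by push_cast; ring))⟩
  set x := z - (w ⬝ᵥ z) • ρu
  obtain ⟨α, β, hx⟩ := hT.affInd.exists_eq_smul_sub_add_smul_sub (by simp)
    (dotProductEquiv ℝ (Fin 3) (toR3 w)) (by intro i; fin_cases i <;> simp [*])
    (x := toR3 x) (by simp only [dotProductEquiv_apply_apply, toR3_dotProduct, x, dotProduct_sub,
      dotProduct_smul, hwu, smul_eq_mul, mul_one, sub_self, Int.cast_zero])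
  replace hx : toR3 x = α • toR3 (ρ₀ - ρu) + (β * (n + 1)) • toR3 b := by
    simp only [Matrix.cons_val_zero, Matrix.cons_val_one, Matrix.cons_val_two, Matrix.tail_cons,
      Matrix.head_cons] at hx
    rw [hx, ← toR3_sub, ← toR3_sub, hb, toR3_smul, mul_smul]
    push_cast
    rfl
  obtain ⟨⟨A, rfl⟩, ⟨B, hB⟩⟩ := (fract_eq_zero_of_toR3_eq hn hT.no_interior_point hb hua hub hx).imp
    Int.fract_eq_zero_iff.mp Int.fract_eq_zero_iff.mp
  refine ⟨w ⬝ᵥ z, A, B, toR3_injective ?_⟩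
  rw [← hB] at hx
  simp only [x, toR3_add, toR3_sub, toR3_smul] at hx ⊢
  linear_combination (norm := module) hx

end Triangle

/-- For two adjacent `Aₙ`-triangles with supporting linear forms `w₀`, `w₁`,
the lattice length of the segment from `w₀` to `w₁` in the dual lattice (the gcd of the
coordinates of `w₀ − w₁` in the dual basis) equals `|1 − ⟨w₁, ρ₀⟩|`. -/
theorem adjacent_An_triangles_dual_edge_length
    (n : ℕ) (hn : 1 ≤ n) (ρ₀ ρ₁ ρu ρv : Fin 3 → ℤ)
    (h : AreAdjacentAnTriangles n ρ₀ ρ₁ ρu ρv)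
    (w₀ w₁ : Fin 3 → ℤ)
    (hw₀ : w₀ ⬝ᵥ ρ₀ = 1 ∧ w₀ ⬝ᵥ ρu = 1 ∧ w₀ ⬝ᵥ ρv = 1)
    (hw₁ : w₁ ⬝ᵥ ρ₁ = 1 ∧ w₁ ⬝ᵥ ρu = 1 ∧ w₁ ⬝ᵥ ρv = 1) :
    ((latticeLength w₀ w₁ : ℤ)) = |1 - w₁ ⬝ᵥ ρ₀| := by
  obtain ⟨hw₀₀, hw₀u, hw₀v⟩ := hw₀
  obtain ⟨-, hw₁u, hw₁v⟩ := hw₁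
  obtain ⟨b, hb⟩ := exists_sub_eq_latticeLength_smul ρu ρv
  rw [h.common_edge_length, Nat.cast_add_one] at hb
  have hu : (w₁ - w₀) ⬝ᵥ ρu = 0 := by simp [sub_dotProduct, hw₀u, hw₁u]
  have hb₀ : (w₁ - w₀) ⬝ᵥ b = 0 := by
    have : (w₁ - w₀) ⬝ᵥ (ρv - ρu) = 0 := by
      rw [dotProduct_sub, hu, sub_dotProduct, hw₀v, hw₁v, sub_self, sub_self]
    rw [hb, dotProduct_smul, smul_eq_mul] at this
    exact (mul_eq_zero.mp this).resolve_left (by positivity)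
  have h₀ : (w₁ - w₀) ⬝ᵥ ρ₀ = w₁ ⬝ᵥ ρ₀ - 1 := by rw [sub_dotProduct, hw₀₀]
  have hdvd (i : Fin 3) : w₁ ⬝ᵥ ρ₀ - 1 ∣ w₁ i - w₀ i := by
    obtain ⟨p, q, r, hz⟩ := h.t₀.exists_int_coords hn h.common_edge_length hb (Pi.single i 1)
    have := congrArg ((w₁ - w₀) ⬝ᵥ ·) hz
    simp only [dotProduct_single, dotProduct_add, dotProduct_smul, dotProduct_sub, hu, hb₀, h₀,
      Pi.sub_apply, mul_one, smul_eq_mul] at this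
    exact Dvd.intro_left q (by linear_combination this.symm)
  rw [latticeLength_eq_natAbs hdvd h₀, Int.natCast_natAbs, abs_sub_comm]
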